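/- Double-robust moment condition under a correctly specified linear Y-model (model (a)): if the null hypothesis β₀ = β* holds and Y = Xβ* + Zᵀγ₀ + ε with X = f(Z) + η for an arbitrary (measurable, bounded on the support of Z) function f, then E[(W − Zᵀθ₀)(V − Zᵀγ₀) + σ_U²β*] = 0; equivalently, E[(f(Z) − Zᵀθ₀ + η + U)(ε − Uβ*) + σ_U²β*] = 0. -/

import Mathlib

open MeasureTheory ProbabilityTheory Filter Real Matrix Finset

noncomputable section

/-- The standard normal cumulative distribution function `Φ`. -/
def stdNormalCDF (t : ℝ) : ℝ :=
  (∫ x in Set.Iic t, Real.exp (-(x ^ 2) / 2)) / Real.sqrt (2 * Real.pi)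

/-- The sub-Gaussian norm of `S` is at most `K`:
`‖S‖_{ψ₂} = sup_{q ≥ 1} q^{-1/2} (E|S|^q)^{1/q} ≤ K`. -/
def SubGNormLe {Ω : Type*} [MeasurableSpace Ω] (μ : Measure Ω) (S : Ω → ℝ) (K : ℝ) : Prop :=
  ∀ q : ℝ, 1 ≤ q → (∫ ω, |S ω| ^ q ∂μ) ^ (1 / q) ≤ K * Real.sqrt q

/-- The sub-exponential norm of `S` is at most `K`:
`‖S‖_{ψ₁} = sup_{q ≥ 1} q⁻¹ (E|S|^q)^{1/q} ≤ K`. -/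
def SubENormLe {Ω : Type*} [MeasurableSpace Ω] (μ : Measure Ω) (S : Ω → ℝ) (K : ℝ) : Prop :=
  ∀ q : ℝ, 1 ≤ q → (∫ ω, |S ω| ^ q ∂μ) ^ (1 / q) ≤ K * q

/-- Population Gram matrix `Σ_ZZ = E[Z Zᵀ]`. -/
def pGram {Ω : Type*} [MeasurableSpace Ω] (μ : Measure Ω) {p : ℕ} (Z : Ω → Fin p → ℝ) :
    Matrix (Fin p) (Fin p) ℝ :=
  Matrix.of fun j k => ∫ ω, Z ω j * Z ω k ∂μ

/-- Population least-squares coefficient `(E[Z Zᵀ])⁻¹ E[Z R]`. -/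
def pCoef {Ω : Type*} [MeasurableSpace Ω] (μ : Measure Ω) {p : ℕ} (Z : Ω → Fin p → ℝ)
    (R : Ω → ℝ) : Fin p → ℝ :=
  (pGram μ Z)⁻¹ *ᵥ fun j => ∫ ω, Z ω j * R ω ∂μ

/-- Sample Gram matrix `n⁻¹ Σᵢ Zᵢ Zᵢᵀ`. -/
def sGram {Ω : Type*} (p n : ℕ) (Z : ℕ → Ω → Fin p → ℝ) (ω : Ω) :
    Matrix (Fin p) (Fin p) ℝ :=
  Matrix.of fun j k => (n : ℝ)⁻¹ * ∑ i ∈ Finset.range n, Z i ω j * Z i ω k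

/-- Ordinary least squares estimator of the regression of `R` on `Z`. -/
def olsHat {Ω : Type*} (p n : ℕ) (Z : ℕ → Ω → Fin p → ℝ) (R : ℕ → Ω → ℝ) (ω : Ω) :
    Fin p → ℝ :=
  (sGram p n Z ω)⁻¹ *ᵥ fun j => (n : ℝ)⁻¹ * ∑ i ∈ Finset.range n, Z i ω j * R i ω

/-- The score statistic `T`. -/
def Tstat {Ω : Type*} (p n : ℕ) (Z : ℕ → Ω → Fin p → ℝ) (W V : ℕ → Ω → ℝ)
    (θh γh : Ω → Fin p → ℝ) (σU2 βs : ℝ) (ω : Ω) : ℝ :=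
  (Real.sqrt n)⁻¹ * ∑ i ∈ Finset.range n,
    ((W i ω - ∑ j, Z i ω j * θh ω j) * (V i ω - ∑ j, Z i ω j * γh ω j) + σU2 * βs)

/-- The variance estimator `σ̂²`. -/
def sigHat2 {Ω : Type*} (p n : ℕ) (Z : ℕ → Ω → Fin p → ℝ) (W V : ℕ → Ω → ℝ)
    (θh γh : Ω → Fin p → ℝ) (σU2 βs : ℝ) (ω : Ω) : ℝ :=
  (n : ℝ)⁻¹ * ∑ i ∈ Finset.range n,
    ((W i ω - ∑ j, Z i ω j * θh ω j) * (V i ω - ∑ j, Z i ω j * γh ω j) + σU2 * βs) ^ 2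

/-- The standardized statistic `T_DF = T / σ̂`. -/
def TDF {Ω : Type*} (p n : ℕ) (Z : ℕ → Ω → Fin p → ℝ) (W V : ℕ → Ω → ℝ)
    (θh γh : Ω → Fin p → ℝ) (σU2 βs : ℝ) (ω : Ω) : ℝ :=
  Tstat p n Z W V θh γh σU2 βs ω / Real.sqrt (sigHat2 p n Z W V θh γh σU2 βs ω)

/-- The penalized least-squares objective. -/
def penObj {Ω : Type*} (p n : ℕ) (Z : ℕ → Ω → Fin p → ℝ) (R : ℕ → Ω → ℝ)
    (pen : ℝ → ℝ) (ω : Ω) (γ : Fin p → ℝ) : ℝ :=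
  (2 * n : ℝ)⁻¹ * ∑ i ∈ Finset.range n, (R i ω - ∑ j, Z i ω j * γ j) ^ 2 + ∑ j, pen (γ j)

/-!
Under the linear `Y`-model the second factor is `V - Zᵀγ₀ = ε - Uβ*`, and the first is
`W - Zᵀθ₀ = G + U` with `G = X - Zᵀθ₀ = f(Z) - Zᵀθ₀ + η` a function of `(X, Z)`. Independence kills
`E[Gε]`, `E[GU]` and `E[Uε]`, leaving `-β* E[U²] = -σ_U² β*`, which the correction cancels.
-/

section CorrectedScore

variable {Ω : Type*} [MeasurableSpace Ω] {μ : Measure Ω}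

lemma integral_mul_eq_zero_of_indepFun {X Y : Ω → ℝ} (hXY : IndepFun X Y μ)
    (hX : AEStronglyMeasurable X μ) (hY : AEStronglyMeasurable Y μ) (hY0 : ∫ ω, Y ω ∂μ = 0) :
    ∫ ω, X ω * Y ω ∂μ = 0 := by
  rw [hXY.integral_fun_mul_eq_mul_integral hX hY, hY0, mul_zero]

theorem integral_corrected_score_eq_zero [IsProbabilityMeasure μ] {G ε U : Ω → ℝ} (β σU2 : ℝ)
    (hG : Integrable G μ) (hε : Integrable ε μ) (hU : MemLp U 2 μ)
    (hεG : IndepFun ε G μ) (hUG : IndepFun U G μ) (hUε : IndepFun U ε μ)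
    (hε0 : ∫ ω, ε ω ∂μ = 0) (hU0 : ∫ ω, U ω ∂μ = 0) (hUvar : ∫ ω, U ω ^ 2 ∂μ = σU2) :
    ∫ ω, ((G ω + U ω) * (ε ω - U ω * β) + σU2 * β) ∂μ = 0 := by
  have hU1 : Integrable U μ := hU.integrable one_le_two
  have hGε : ∫ ω, G ω * ε ω ∂μ = 0 :=
    integral_mul_eq_zero_of_indepFun hεG.symm hG.1 hε.1 hε0
  have hGU : ∫ ω, G ω * U ω ∂μ = 0 :=
    integral_mul_eq_zero_of_indepFun hUG.symm hG.1 hU1.1 hU0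
  have hUε0 : ∫ ω, U ω * ε ω ∂μ = 0 :=
    integral_mul_eq_zero_of_indepFun hUε hU1.1 hε.1 hε0
  have hexpand : (fun ω => (G ω + U ω) * (ε ω - U ω * β) + σU2 * β) = fun ω =>
      (G ω * ε ω - G ω * U ω * β) + (U ω * ε ω + (σU2 * β - U ω ^ 2 * β)) := by
    funext ω; ring
  have iGε : Integrable (fun ω => G ω * ε ω) μ := hεG.symm.integrable_mul hG hε
  have iGU : Integrable (fun ω => G ω * U ω * β) μ :=
    (hUG.symm.integrable_mul hG hU1).mul_const β
  have iUε : Integrable (fun ω => U ω * ε ω) μ := hUε.integrable_mul hU1 hε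
  have iU2 : Integrable (fun ω => U ω ^ 2 * β) μ := hU.integrable_sq.mul_const β
  have iGεU : Integrable (fun ω => G ω * ε ω - G ω * U ω * β) μ := iGε.sub iGU
  have iU2c : Integrable (fun ω => σU2 * β - U ω ^ 2 * β) μ := (integrable_const _).sub iU2
  have iUεU : Integrable (fun ω => U ω * ε ω + (σU2 * β - U ω ^ 2 * β)) μ := iUε.add iU2c
  rw [hexpand, integral_add iGεU iUεU, integral_sub iGε iGU, integral_add iUε iU2c,
    integral_sub (integrable_const _) iU2, integral_mul_const, integral_mul_const β (U · ^ 2),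
    integral_const, hGε, hGU, hUε0, hUvar]
  simp

end CorrectedScore

theorem statement0_general
    {Ω : Type*} [MeasurableSpace Ω] (μ : Measure Ω) [IsProbabilityMeasure μ]
    {p : ℕ}
    (X Y ε η U W V : Ω → ℝ) (Z : Ω → Fin p → ℝ)
    (f : (Fin p → ℝ) → ℝ) (σU2 βs : ℝ)
    -- square integrability
    (hL2X : MemLp X 2 μ) (hL2ε : MemLp ε 2 μ) (hL2U : MemLp U 2 μ)
    (hL2Z : ∀ j, MemLp (fun ω => Z ω j) 2 μ)
    -- observed surrogate and pseudo-response
    (hW : ∀ ω, W ω = X ω + U ω)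
    (hV : ∀ ω, V ω = Y ω - W ω * βs)
    -- measurement error: mean zero, variance `σ_U²`, independent of `(X, Z, ε, η)`
    (hU0 : ∫ ω, U ω ∂μ = 0)
    (hUvar : ∫ ω, (U ω) ^ 2 ∂μ = σU2)
    (hUindep : IndepFun U (fun ω => (X ω, Z ω, ε ω, η ω)) μ)
    -- regression error `ε`: mean zero, variance `σ_ε²`, independent of `(X, Z)`
    (hε0 : ∫ ω, ε ω ∂μ = 0)
    (hεindep : IndepFun ε (fun ω => (X ω, Z ω)) μ)
    -- model (a): the null `β₀ = β*` holds, the `Y`-model is linear with true coefficient `γ₀`,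
    -- and `X = f(Z) + η` for an arbitrary measurable `f` bounded on the support of `Z`
    (γ0 : Fin p → ℝ)
    (hmodelY : ∀ ω, Y ω = X ω * βs + (∑ j, Z ω j * γ0 j) + ε ω)
    (hmodelX : ∀ ω, X ω = f (Z ω) + η ω)
    (θ0 : Fin p → ℝ) :
    (∫ ω, ((W ω - ∑ j, Z ω j * θ0 j) * (V ω - ∑ j, Z ω j * γ0 j) + σU2 * βs) ∂μ = 0) ∧
    (∫ ω, ((f (Z ω) - (∑ j, Z ω j * θ0 j) + η ω + U ω) * (ε ω - U ω * βs) + σU2 * βs) ∂μ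
      = 0) := by
  have hresid : Measurable fun q : ℝ × (Fin p → ℝ) => q.1 - ∑ j, q.2 j * θ0 j := by fun_prop
  have hG : Integrable (fun ω => X ω - ∑ j, Z ω j * θ0 j) μ :=
    (hL2X.integrable one_le_two).sub
      (integrable_finsetSum _ fun j _ => ((hL2Z j).integrable one_le_two).mul_const _)
  have hmoment := integral_corrected_score_eq_zero βs σU2 hG (hL2ε.integrable one_le_two) hL2U
    (hεindep.comp measurable_id hresid)
    (hUindep.comp measurable_id (hresid.comp (measurable_fst.prodMk measurable_snd.fst)))
    (hUindep.comp measurable_id measurable_snd.snd.fst) hε0 hU0 hUvar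
  constructor
  · rw [← hmoment]
    congr 1; funext ω
    simp only [hV, hmodelY, hW]; ring
  · rw [← hmoment]
    congr 1; funext ω
    simp only [hmodelX]; ring

/-- double-robust moment condition under a correctly specified linear
`Y`-model (model (a)). -/
theorem statement0
    {Ω : Type*} [MeasurableSpace Ω] (μ : Measure Ω) [IsProbabilityMeasure μ]
    {p : ℕ}
    (X Y ε η U W V : Ω → ℝ) (Z : Ω → Fin p → ℝ)
    (f : (Fin p → ℝ) → ℝ) (σU2 σε2 ση2 βs : ℝ)
    -- measurability
    (hmX : Measurable X) (hmY : Measurable Y) (hmε : Measurable ε)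
    (hmη : Measurable η) (hmU : Measurable U) (hmZ : Measurable Z)
    (hmf : Measurable f)
    -- square integrability
    (hL2X : MemLp X 2 μ) (hL2Y : MemLp Y 2 μ) (hL2ε : MemLp ε 2 μ)
    (hL2η : MemLp η 2 μ) (hL2U : MemLp U 2 μ)
    (hL2Z : ∀ j, MemLp (fun ω => Z ω j) 2 μ)
    -- observed surrogate and pseudo-response
    (hW : ∀ ω, W ω = X ω + U ω)
    (hV : ∀ ω, V ω = Y ω - W ω * βs)
    -- measurement error: mean zero, variance `σ_U²`, independent of `(X, Z, ε, η)`
    (hU0 : ∫ ω, U ω ∂μ = 0)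
    (hUvar : ∫ ω, (U ω) ^ 2 ∂μ = σU2)
    (hUindep : IndepFun U (fun ω => (X ω, Z ω, ε ω, η ω)) μ)
    -- regression error `ε`: mean zero, variance `σ_ε²`, independent of `(X, Z)`
    (hε0 : ∫ ω, ε ω ∂μ = 0)
    (hεvar : ∫ ω, (ε ω) ^ 2 ∂μ = σε2)
    (hεindep : IndepFun ε (fun ω => (X ω, Z ω)) μ)
    -- error `η`: conditionally centered given `Z`, variance `σ_η²`, independent of `(U, ε)`
    (hηcond : μ[η | MeasurableSpace.comap Z inferInstance] =ᵐ[μ] 0)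
    (hηvar : ∫ ω, (η ω) ^ 2 ∂μ = ση2)
    (hηindep : IndepFun η (fun ω => (U ω, ε ω)) μ)
    -- model (a): the null `β₀ = β*` holds, the `Y`-model is linear with true coefficient `γ₀`,
    -- and `X = f(Z) + η` for an arbitrary measurable `f` bounded on the support of `Z`
    (γ0 : Fin p → ℝ)
    (hmodelY : ∀ ω, Y ω = X ω * βs + (∑ j, Z ω j * γ0 j) + ε ω)
    (hmodelX : ∀ ω, X ω = f (Z ω) + η ω)
    (hfbd : ∃ M : ℝ, ∀ᵐ ω ∂μ, |f (Z ω)| ≤ M)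
    -- population least-squares coefficient `θ₀ = Σ_ZZ⁻¹ E[Z W]`, `Σ_ZZ` invertible
    (hGram : IsUnit (pGram μ Z).det)
    (θ0 : Fin p → ℝ)
    (hθ0 : θ0 = pCoef μ Z W)
    -- integrability of the displayed products
    (hint1 : Integrable
      (fun ω => (W ω - ∑ j, Z ω j * θ0 j) * (V ω - ∑ j, Z ω j * γ0 j)) μ)
    (hint2 : Integrable
      (fun ω => (f (Z ω) - (∑ j, Z ω j * θ0 j) + η ω + U ω) * (ε ω - U ω * βs)) μ) :
    (∫ ω, ((W ω - ∑ j, Z ω j * θ0 j) * (V ω - ∑ j, Z ω j * γ0 j) + σU2 * βs) ∂μ = 0) ∧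
    (∫ ω, ((f (Z ω) - (∑ j, Z ω j * θ0 j) + η ω + U ω) * (ε ω - U ω * βs) + σU2 * βs) ∂μ
      = 0) :=
  statement0_general μ X Y ε η U W V Z f σU2 βs hL2X hL2ε hL2U hL2Z hW hV hU0 hUvar hUindep hε0
    hεindep γ0 hmodelY hmodelX θ0

end
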